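/- Let n, p be positive integers, X an n×p real matrix, S ⊆ {1,…,p}, and let X_S (respectively X_{S^c}) denote the submatrix of X with columns indexed by S (respectively by the complement of S). Suppose X_SᵀX_S is invertible. Let β* ∈ ℝ^p with supp(β*) ⊆ S, let ε ∈ ℝ^n, and set y := Xβ* + ε, γ̂ := Xᵀy/n, Γ̂ := XᵀX/n. Then γ̂_{S^c} − Γ̂_{S^cS}(Γ̂_{SS})^{−1}γ̂_S = X_{S^c}ᵀΠε/n, where Π := I_n − X_S(X_SᵀX_S)^{−1}X_Sᵀ is the orthogonal projection onto the orthogonal complement of the column space of X_S. -/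

import Mathlib

open scoped BigOperators
open Matrix

/-- The submatrix of `X` consisting of the columns indexed by `S`. -/
noncomputable def colsIn (n p : ℕ) (X : Matrix (Fin n) (Fin p) ℝ) (S : Finset (Fin p)) :
    Matrix (Fin n) {j : Fin p // j ∈ S} ℝ :=
  X.submatrix id fun j => (j : Fin p)

/-- The submatrix of `X` consisting of the columns indexed by the complement of `S`. -/
noncomputable def colsOut (n p : ℕ) (X : Matrix (Fin n) (Fin p) ℝ) (S : Finset (Fin p)) :
    Matrix (Fin n) {j : Fin p // j ∉ S} ℝ :=
  X.submatrix id fun j => (j : Fin p)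

/-! Since `supp β* ⊆ S`, `y = X_S β*_S + ε`. The factors `1/n` cancel in
`Γ̂_{S^cS} Γ̂_{SS}⁻¹ γ̂_S = X_{S^c}ᵀ X_S (X_SᵀX_S)⁻¹ X_Sᵀ y / n`, so the left side is
`X_{S^c}ᵀ Π y / n`, and `Π y = Π ε` because `Π` annihilates the column space of `X_S`. -/

section Projection

variable {m s t K : Type*} [Fintype m] [Fintype s] [DecidableEq m] [DecidableEq s]
  [Field K]

-- For `c = 0` both sides vanish, as `0⁻¹ = 0`.
lemma Matrix.inv_smul_of_isUnit_det (c : K) {M : Matrix s s K} (h : IsUnit M.det) :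
    (c • M)⁻¹ = c⁻¹ • M⁻¹ := by
  rcases eq_or_ne c 0 with rfl | hc
  · simp
  · exact M.inv_smul' (Units.mk0 c hc) h

lemma one_sub_proj_mul_self {A : Matrix m s K} (h : IsUnit (Aᵀ * A).det) :
    (1 - A * (Aᵀ * A)⁻¹ * Aᵀ) * A = 0 := by
  rw [Matrix.sub_mul, Matrix.one_mul, Matrix.mul_assoc, Matrix.mul_assoc,
    Matrix.nonsing_inv_mul _ h, Matrix.mul_one, sub_self]

lemma one_sub_proj_mulVec_add_mulVec {A : Matrix m s K} (h : IsUnit (Aᵀ * A).det)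
    (b : s → K) (ε : m → K) :
    (1 - A * (Aᵀ * A)⁻¹ * Aᵀ) *ᵥ (A *ᵥ b + ε) = (1 - A * (Aᵀ * A)⁻¹ * Aᵀ) *ᵥ ε := by
  rw [mulVec_add, mulVec_mulVec, one_sub_proj_mul_self h, zero_mulVec, zero_add]

lemma smul_schur_residual (c : K) (A : Matrix m s K) (B : Matrix m t K)
    (h : IsUnit (Aᵀ * A).det) (y : m → K) :
    c • Bᵀ *ᵥ y - (c • (Bᵀ * A)) *ᵥ ((c • (Aᵀ * A))⁻¹ *ᵥ (c • Aᵀ *ᵥ y)) =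
      c • Bᵀ *ᵥ ((1 - A * (Aᵀ * A)⁻¹ * Aᵀ) *ᵥ y) := by
  simp only [Matrix.inv_smul_of_isUnit_det c h, smul_mulVec, mulVec_smul, smul_smul,
    mul_inv_mul_cancel]
  rw [← smul_sub, mulVec_mulVec, mulVec_mulVec, mulVec_mulVec, ← sub_mulVec, Matrix.mul_sub,
    Matrix.mul_one]
  simp only [Matrix.mul_assoc]

end Projection

lemma mulVec_eq_colsIn_mulVec {n p : ℕ} (X : Matrix (Fin n) (Fin p) ℝ) (S : Finset (Fin p))
    (β : Fin p → ℝ) (hβ : ∀ j, β j ≠ 0 → j ∈ S) :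
    X *ᵥ β = colsIn n p X S *ᵥ fun i => β i := by
  ext k
  simp only [mulVec, dotProduct, colsIn, submatrix_apply, id]
  rw [Finset.sum_coe_sort S fun j => X k j * β j]
  refine (Finset.sum_subset S.subset_univ fun j _ hj => ?_).symm
  rw [not_imp_comm.mp (hβ j) hj, mul_zero]

theorem residual_projection_identity (n p : ℕ)
    (X : Matrix (Fin n) (Fin p) ℝ) (S : Finset (Fin p))
    (hinv : IsUnit ((colsIn n p X S)ᵀ * colsIn n p X S).det)
    (βstar : Fin p → ℝ) (hβ : ∀ j, βstar j ≠ 0 → j ∈ S)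
    (ε : Fin n → ℝ) :
    let y : Fin n → ℝ := X.mulVec βstar + ε
    let γhat : Fin p → ℝ := (n : ℝ)⁻¹ • (Xᵀ.mulVec y)
    let Γhat : Matrix (Fin p) (Fin p) ℝ := (n : ℝ)⁻¹ • (Xᵀ * X)
    let ΓSS : Matrix {j : Fin p // j ∈ S} {j : Fin p // j ∈ S} ℝ :=
      Γhat.submatrix (fun i => (i : Fin p)) (fun j => (j : Fin p))
    let ΓScS : Matrix {j : Fin p // j ∉ S} {j : Fin p // j ∈ S} ℝ :=
      Γhat.submatrix (fun i => (i : Fin p)) (fun j => (j : Fin p))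
    let Pi : Matrix (Fin n) (Fin n) ℝ :=
      1 - colsIn n p X S * ((colsIn n p X S)ᵀ * colsIn n p X S)⁻¹ * (colsIn n p X S)ᵀ
    ∀ j : {j : Fin p // j ∉ S},
      γhat j - ΓScS.mulVec (ΓSS⁻¹.mulVec fun i : {j : Fin p // j ∈ S} => γhat i) j =
        (n : ℝ)⁻¹ * ((colsOut n p X S)ᵀ.mulVec (Pi.mulVec ε)) j := by
  intro y γhat Γhat ΓSS ΓScS Pi j
  have hres : Pi *ᵥ y = Pi *ᵥ ε := by
    rw [show y = colsIn n p X S *ᵥ (fun i => βstar i) + ε by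
      rw [← mulVec_eq_colsIn_mulVec X S βstar hβ], one_sub_proj_mulVec_add_mulVec hinv]
  calc _ = ((n : ℝ)⁻¹ • (colsOut n p X S)ᵀ *ᵥ (Pi *ᵥ y)) j :=
        congrFun (smul_schur_residual _ (colsIn n p X S) (colsOut n p X S) hinv y) j
    _ = _ := by rw [hres]; rfl
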